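/- arXiv:2210.00210 — 4 statements merged into one kernel-verified Lean document; each statement's English description precedes it below -/
import Mathlib

section
/- Let I1 ⊆ S1 = K[x_1,…,x_n] and I2 ⊆ S2 = K[y_1,…,y_m] be squarefree monomial ideals in disjoint sets of variables, and let I1·I2 denote their product in S = K[x_1,…,x_n,y_1,…,y_m]. Then for every k ≥ 1 one has (I1·I2)^[k] = I1^[k] · I2^[k]. -/
open MvPolynomial

/-- The squarefree monomial `∏ i ∈ F, xᵢ`. -/
noncomputable def sqMon (K : Type) [Field K] {σ : Type} (F : Finset σ) :
    MvPolynomial σ K := ∏ i ∈ F, X i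

/-- `I` is a squarefree monomial ideal if it is generated by squarefree monomials. -/
def IsSqfreeMonomialIdeal (K : Type) [Field K] {σ : Type}
    (I : Ideal (MvPolynomial σ K)) : Prop :=
  ∃ 𝒢 : Set (Finset σ), I = Ideal.span ((sqMon K) '' 𝒢)

/-- The `k`-th squarefree power `I^[k]`: the ideal generated by all squarefree
monomials belonging to `I^k`. -/
noncomputable def sqfreePower (K : Type) [Field K] {σ : Type}
    (I : Ideal (MvPolynomial σ K)) (k : ℕ) : Ideal (MvPolynomial σ K) :=
  Ideal.span {m | ∃ F : Finset σ, m = sqMon K F ∧ m ∈ I ^ k}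

/-- The monomial grade `ν(I)`: the largest `k` with `I^[k] ≠ (0)`. -/
noncomputable def monGrade (K : Type) [Field K] {σ : Type}
    (I : Ideal (MvPolynomial σ K)) : ℕ :=
  sSup {k | sqfreePower K I k ≠ ⊥}

/-- The initial degree of a squarefree monomial ideal: the least degree of a
(squarefree) monomial belonging to it. -/
noncomputable def indeg (K : Type) [Field K] {σ : Type}
    (I : Ideal (MvPolynomial σ K)) : ℕ :=
  sInf {d | ∃ F : Finset σ, F.card = d ∧ sqMon K F ∈ I}

/-- The depth of `S/I` over the polynomial ring `S`: the longest length of a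
regular sequence on `S/I` consisting of elements of the irrelevant maximal ideal. -/
noncomputable def polyDepth (K : Type) [Field K] {σ : Type}
    (I : Ideal (MvPolynomial σ K)) : ℕ :=
  sSup {k | ∃ rs : List (MvPolynomial σ K), rs.length = k ∧
    (∀ r ∈ rs, r ∈ Ideal.span (Set.range (X : σ → MvPolynomial σ K))) ∧
    RingTheory.Sequence.IsRegular (MvPolynomial σ K ⧸ I) rs}

/-- The normalized depth function `g_I(k) = depth(S/I^[k]) - (indeg(I^[k]) - 1)`. -/
noncomputable def nDepth (K : Type) [Field K] {σ : Type}
    (I : Ideal (MvPolynomial σ K)) (k : ℕ) : ℤ :=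
  (polyDepth K (sqfreePower K I k) : ℤ) - ((indeg K (sqfreePower K I k) : ℤ) - 1)

/-!
A squarefree monomial ideal is a monomial ideal, and powers of monomial ideals are monomial, so
`(I₁I₂)ᵏ = I₁ᵏ·I₂ᵏ` is again a product of monomial ideals in disjoint sets of variables. Since
divisibility of monomials is checked variable by variable, a monomial `xᵃyᵇ` lies in such a
product `J₁·J₂` exactly when `xᵃ ∈ J₁` and `yᵇ ∈ J₂`. Applied to the squarefree monomials
`x_F y_G`, this matches the generators of `(I₁I₂)^[k]` with the products of generators of
`I₁^[k]` and `I₂^[k]`.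
-/

open Pointwise

theorem Finsupp.sumElim_le_sumElim_iff {α β γ : Type*} [Zero γ] [LE γ] {u a : α →₀ γ}
    {v b : β →₀ γ} :
    u.sumElim v ≤ a.sumElim b ↔ u ≤ a ∧ v ≤ b := by
  simp only [Finsupp.le_def, Sum.forall, Finsupp.sumElim_inl, Finsupp.sumElim_inr]

namespace MvPolynomial

section MonomialIdeal

variable (R : Type*) [CommSemiring R] {σ σ₁ σ₂ : Type*}

noncomputable def monomialIdeal (S : Set (σ →₀ ℕ)) : Ideal (MvPolynomial σ R) :=
  Ideal.span ((fun u => monomial u 1) '' S)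

variable {R}

theorem monomial_one_mem_monomialIdeal [Nontrivial R] {S : Set (σ →₀ ℕ)} {v : σ →₀ ℕ} :
    monomial v (1 : R) ∈ monomialIdeal R S ↔ ∃ u ∈ S, u ≤ v := by
  classical
  rw [monomialIdeal, mem_ideal_span_monomial_image, support_monomial, if_neg one_ne_zero]
  simp

theorem monomialIdeal_mul (S T : Set (σ →₀ ℕ)) :
    monomialIdeal R S * monomialIdeal R T = monomialIdeal R (S + T) := by
  rw [monomialIdeal, monomialIdeal, Ideal.span_mul_span', monomialIdeal, ← Set.image2_mul,
    ← Set.image2_add, Set.image_image2, Set.image2_image_left, Set.image2_image_right]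
  simp only [monomial_mul, one_mul]

theorem monomialIdeal_singleton_zero : monomialIdeal R ({0} : Set (σ →₀ ℕ)) = ⊤ := by
  simp [monomialIdeal]

theorem exists_monomialIdeal_pow_eq (S : Set (σ →₀ ℕ)) (k : ℕ) :
    ∃ T, monomialIdeal R S ^ k = monomialIdeal R T := by
  induction k with
  | zero => exact ⟨{0}, by rw [pow_zero, Ideal.one_eq_top, monomialIdeal_singleton_zero]⟩
  | succ k ih =>
    obtain ⟨T, hT⟩ := ih
    exact ⟨T + S, by rw [pow_succ, hT, monomialIdeal_mul]⟩

theorem map_rename_monomialIdeal (f : σ₁ → σ₂) (S : Set (σ₁ →₀ ℕ)) :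
    (monomialIdeal R S).map (rename f) = monomialIdeal R (Finsupp.mapDomain f '' S) := by
  simp only [monomialIdeal, Ideal.map_span, Set.image_image, rename_monomial]

theorem rename_inl_mul_rename_inr_monomial (a : σ₁ →₀ ℕ) (b : σ₂ →₀ ℕ) (r s : R) :
    rename Sum.inl (monomial a r) * rename Sum.inr (monomial b s) =
      (monomial (a.sumElim b) (r * s) : MvPolynomial (σ₁ ⊕ σ₂) R) := by
  rw [rename_monomial, rename_monomial, monomial_mul, Finsupp.sumElim_eq_add]

theorem monomial_sumElim_mem_map_inl_mul_map_inr [Nontrivial R]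
    (S₁ : Set (σ₁ →₀ ℕ)) (S₂ : Set (σ₂ →₀ ℕ)) (a : σ₁ →₀ ℕ) (b : σ₂ →₀ ℕ) :
    monomial (a.sumElim b) (1 : R) ∈
        (monomialIdeal R S₁).map (rename Sum.inl) * (monomialIdeal R S₂).map (rename Sum.inr) ↔
      monomial a (1 : R) ∈ monomialIdeal R S₁ ∧ monomial b (1 : R) ∈ monomialIdeal R S₂ := by
  rw [map_rename_monomialIdeal, map_rename_monomialIdeal, monomialIdeal_mul,
    monomial_one_mem_monomialIdeal, monomial_one_mem_monomialIdeal, monomial_one_mem_monomialIdeal]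
  constructor
  · rintro ⟨_, ⟨_, ⟨u, hu, rfl⟩, _, ⟨v, hv, rfl⟩, rfl⟩, hle⟩
    beta_reduce at hle
    rw [← Finsupp.sumElim_eq_add, Finsupp.sumElim_le_sumElim_iff] at hle
    exact ⟨⟨u, hu, hle.1⟩, v, hv, hle.2⟩
  · rintro ⟨⟨u, hu, hua⟩, v, hv, hvb⟩
    refine ⟨_, ⟨_, ⟨u, hu, rfl⟩, _, ⟨v, hv, rfl⟩, rfl⟩, ?_⟩
    beta_reduce
    rw [← Finsupp.sumElim_eq_add, Finsupp.sumElim_le_sumElim_iff]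
    exact ⟨hua, hvb⟩

end MonomialIdeal

section Squarefree

variable {K : Type} [Field K] {σ σ₁ σ₂ : Type}

theorem sqMon_eq_monomial (F : Finset σ) :
    sqMon K F = monomial (∑ i ∈ F, Finsupp.single i 1) 1 := by
  rw [sqMon, monomial_sum_one]
  rfl

theorem sqMon_disjSum (F₁ : Finset σ₁) (F₂ : Finset σ₂) :
    sqMon K (F₁.disjSum F₂) = rename Sum.inl (sqMon K F₁) * rename Sum.inr (sqMon K F₂) := by
  simp only [sqMon, Finset.prod_disjSum, map_prod, rename_X]

theorem _root_.IsSqfreeMonomialIdeal.exists_eq_monomialIdeal {I : Ideal (MvPolynomial σ K)}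
    (h : IsSqfreeMonomialIdeal K I) : ∃ S, I = monomialIdeal K S := by
  obtain ⟨𝒢, rfl⟩ := h
  refine ⟨(fun F => ∑ i ∈ F, Finsupp.single i 1) '' 𝒢, ?_⟩
  rw [monomialIdeal, Set.image_image, _root_.funext sqMon_eq_monomial]

theorem sqMon_disjSum_mem_map_inl_mul_map_inr (S₁ : Set (σ₁ →₀ ℕ)) (S₂ : Set (σ₂ →₀ ℕ))
    (F₁ : Finset σ₁) (F₂ : Finset σ₂) :
    sqMon K (F₁.disjSum F₂) ∈
        (monomialIdeal K S₁).map (rename Sum.inl) * (monomialIdeal K S₂).map (rename Sum.inr) ↔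
      sqMon K F₁ ∈ monomialIdeal K S₁ ∧ sqMon K F₂ ∈ monomialIdeal K S₂ := by
  rw [sqMon_disjSum, sqMon_eq_monomial, sqMon_eq_monomial, rename_inl_mul_rename_inr_monomial,
    one_mul, monomial_sumElim_mem_map_inl_mul_map_inr]

theorem sqfreePower_map_inl_mul_map_inr (S₁ : Set (σ₁ →₀ ℕ)) (S₂ : Set (σ₂ →₀ ℕ)) (k : ℕ) :
    sqfreePower K
        ((monomialIdeal K S₁).map (rename Sum.inl) * (monomialIdeal K S₂).map (rename Sum.inr)) k =
      (sqfreePower K (monomialIdeal K S₁) k).map (rename Sum.inl) *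
        (sqfreePower K (monomialIdeal K S₂) k).map (rename Sum.inr) := by
  obtain ⟨T₁, hT₁⟩ := exists_monomialIdeal_pow_eq (R := K) S₁ k
  obtain ⟨T₂, hT₂⟩ := exists_monomialIdeal_pow_eq (R := K) S₂ k
  have mem_pow_iff (F₁ : Finset σ₁) (F₂ : Finset σ₂) :
      sqMon K (F₁.disjSum F₂) ∈
          ((monomialIdeal K S₁).map (rename Sum.inl) *
            (monomialIdeal K S₂).map (rename Sum.inr)) ^ k ↔
        sqMon K F₁ ∈ monomialIdeal K S₁ ^ k ∧ sqMon K F₂ ∈ monomialIdeal K S₂ ^ k := by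
    rw [mul_pow, ← Ideal.map_pow, ← Ideal.map_pow, hT₁, hT₂]
    exact sqMon_disjSum_mem_map_inl_mul_map_inr T₁ T₂ F₁ F₂
  apply le_antisymm
  · rw [sqfreePower, Ideal.span_le]
    rintro _ ⟨F, rfl, hF⟩
    rw [← F.toLeft_disjSum_toRight, mem_pow_iff] at hF
    rw [← F.toLeft_disjSum_toRight, sqMon_disjSum]
    exact Ideal.mul_mem_mul (Ideal.mem_map_of_mem _ (Ideal.subset_span ⟨_, rfl, hF.1⟩))
      (Ideal.mem_map_of_mem _ (Ideal.subset_span ⟨_, rfl, hF.2⟩))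
  · rw [sqfreePower, sqfreePower, Ideal.map_span, Ideal.map_span, Ideal.span_mul_span',
      Ideal.span_le]
    rintro _ ⟨_, ⟨_, ⟨F₁, rfl, hF₁⟩, rfl⟩, _, ⟨_, ⟨F₂, rfl, hF₂⟩, rfl⟩, rfl⟩
    beta_reduce
    rw [← sqMon_disjSum]
    exact Ideal.subset_span ⟨_, rfl, (mem_pow_iff F₁ F₂).2 ⟨hF₁, hF₂⟩⟩

end Squarefree

end MvPolynomial

/-- For squarefree monomial ideals `I₁ ⊆ K[x₁,…,xₙ]` and `I₂ ⊆ K[y₁,…,y_m]` in disjoint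
sets of variables, the squarefree powers of the product in `K[x₁,…,xₙ,y₁,…,y_m]` satisfy
`(I₁I₂)^[k] = I₁^[k]·I₂^[k]` for every `k ≥ 1`. -/
theorem sqfreePower_of_product (K : Type) [Field K] (n m : ℕ)
    (I₁ : Ideal (MvPolynomial (Fin n) K)) (I₂ : Ideal (MvPolynomial (Fin m) K))
    (h₁ : IsSqfreeMonomialIdeal K I₁) (h₂ : IsSqfreeMonomialIdeal K I₂)
    (P : Ideal (MvPolynomial (Fin n ⊕ Fin m) K))
    (hP : P = Ideal.map (MvPolynomial.rename (Sum.inl : Fin n → Fin n ⊕ Fin m)) I₁ *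
              Ideal.map (MvPolynomial.rename (Sum.inr : Fin m → Fin n ⊕ Fin m)) I₂) :
    ∀ k : ℕ, 1 ≤ k →
      sqfreePower K P k =
        Ideal.map (MvPolynomial.rename (Sum.inl : Fin n → Fin n ⊕ Fin m))
            (sqfreePower K I₁ k) *
          Ideal.map (MvPolynomial.rename (Sum.inr : Fin m → Fin n ⊕ Fin m))
            (sqfreePower K I₂ k) := by
  intro k _
  obtain ⟨S₁, rfl⟩ := h₁.exists_eq_monomialIdeal
  obtain ⟨S₂, rfl⟩ := h₂.exists_eq_monomialIdeal
  rw [hP]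
  exact sqfreePower_map_inl_mul_map_inr S₁ S₂ k
end

section
/- Let G be a finite simple graph on vertex set [n] with no isolated vertices such that the complementary graph G^c is chordal and connected with cut vertex 1. Then for every integer k with 2 ≤ k ≤ ν(G), there exists a special k-matching of G. -/
open MvPolynomial

/-- The edge ideal of a graph, generated by `xᵢxⱼ` for edges `{i,j}`. -/
noncomputable def edgeIdeal (K : Type) [Field K] {V : Type} (G : SimpleGraph V) :
    Ideal (MvPolynomial V K) :=
  Ideal.span {m | ∃ i j, G.Adj i j ∧ m = X i * X j}

/-- A finite set of edges of `G` forming a matching (pairwise vertex-disjoint edges). -/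
def IsMatchingSet {V : Type} (G : SimpleGraph V) (M : Finset (Sym2 V)) : Prop :=
  (↑M ⊆ G.edgeSet) ∧ ∀ e ∈ M, ∀ f ∈ M, e ≠ f → ∀ v, v ∈ e → v ∉ f

/-- The vertex set of a set of edges. -/
def matchVerts {V : Type} (M : Finset (Sym2 V)) : Set V := {v | ∃ e ∈ M, v ∈ e}

/-- The matching number of `G`. -/
noncomputable def matchNum {V : Type} (G : SimpleGraph V) : ℕ :=
  sSup {k | ∃ M : Finset (Sym2 V), IsMatchingSet G M ∧ M.card = k}

/-- A graph is chordal if it has no induced cycle of length `≥ 4`. -/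
def IsChordal {V : Type} (G : SimpleGraph V) : Prop :=
  ∀ m : ℕ, 4 ≤ m → ∀ v : ZMod m → V, Function.Injective v →
    ¬ (∀ i j : ZMod m, G.Adj (v i) (v j) ↔ (j = i + 1 ∨ i = j + 1))

/-- `v` is a cut vertex of the connected graph `G`:
removing it disconnects the graph. -/
def IsCutVertex {V : Type} (G : SimpleGraph V) (v : V) : Prop :=
  G.Connected ∧ ¬ (G.induce {u | u ≠ v}).Connected

/-- `G` has no isolated vertices. -/
def NoIsolated {V : Type} (G : SimpleGraph V) : Prop := ∀ v, ∃ u, G.Adj v u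

section SpecialMatching

variable {n : ℕ} (G : SimpleGraph (Fin n)) (v₀ : Fin n) (A B : Set (Fin n))

/-- The standing setup for special matchings: `Gᶜ` is chordal and connected with cut
vertex `v₀`; `A` is (the vertex set of) one connected component of `Gᶜ − v₀` and `B` is
the union of all the other connected components. -/
def CutVertexSetup : Prop :=
  IsChordal Gᶜ ∧ IsCutVertex Gᶜ v₀ ∧
  A ∪ B = {u | u ≠ v₀} ∧ Disjoint A B ∧ A.Nonempty ∧ B.Nonempty ∧
  (∀ a ∈ A, ∀ b ∈ B, ¬ Gᶜ.Adj a b) ∧ (Gᶜ.induce A).Connected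

/-- `e` lists the edges of a `k`-matching of `G`: each `e p` is an edge of `G` and the
edges are pairwise vertex-disjoint. -/
def IsMatchingFamily {k : ℕ} (e : Fin k → Fin n × Fin n) : Prop :=
  (∀ p, G.Adj (e p).1 (e p).2) ∧
  ∀ p q, p ≠ q → ∀ v : Fin n,
    (v = (e p).1 ∨ v = (e p).2) → ¬ (v = (e q).1 ∨ v = (e q).2)

/-- A special `k`-matching (Definition 3.6): a `k`-matching `{e₁,…,e_k}` with
`e₁ = {v₀, j}` for some neighbour `j` of the cut vertex `v₀`, and with the first vertex
of `e₂` in `A = V(C₁)` and the second in `B = V(C₂)`. -/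
def IsSpecialMatching {k : ℕ} (hk : 2 ≤ k) (e : Fin k → Fin n × Fin n) : Prop :=
  IsMatchingFamily G e ∧ (e ⟨0, by omega⟩).1 = v₀ ∧
  (e ⟨1, by omega⟩).1 ∈ A ∧ (e ⟨1, by omega⟩).2 ∈ B

end SpecialMatching

section Aux
variable {n k : ℕ} {G : SimpleGraph (Fin n)}

lemma mf_perm {f : Fin k → Fin n × Fin n} (hf : IsMatchingFamily G f) (σ : Equiv.Perm (Fin k)) :
    IsMatchingFamily G (f ∘ σ) :=
  ⟨fun p => hf.1 _, fun p q hpq v hv => hf.2 _ _ (fun h => hpq (σ.injective h)) v hv⟩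

lemma mf_flip {f : Fin k → Fin n × Fin n} (hf : IsMatchingFamily G f) (p : Fin k) :
    IsMatchingFamily G (Function.update f p ((f p).2, (f p).1)) := by
  constructor
  · intro q
    rcases eq_or_ne q p with rfl | h
    · simp only [Function.update_self]; exact (hf.1 q).symm
    · rw [Function.update_of_ne h]; exact hf.1 q
  · intro q r hqr v hv hv'
    have key : ∀ s (v' : Fin n),
        (v' = (Function.update f p ((f p).2, (f p).1) s).1 ∨
         v' = (Function.update f p ((f p).2, (f p).1) s).2) →
        (v' = (f s).1 ∨ v' = (f s).2) := by
      intro s v' h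
      rcases eq_or_ne s p with rfl | hs
      · simp only [Function.update_self] at h; tauto
      · rwa [Function.update_of_ne hs] at h
    exact hf.2 q r hqr v (key q v hv) (key r v hv')

lemma mf_update {f : Fin k → Fin n × Fin n} (hf : IsMatchingFamily G f) (p : Fin k)
    (e : Fin n × Fin n) (hadj : G.Adj e.1 e.2)
    (hdisj : ∀ q, q ≠ p → ∀ v, (v = e.1 ∨ v = e.2) → ¬ (v = (f q).1 ∨ v = (f q).2)) :
    IsMatchingFamily G (Function.update f p e) := by
  constructor
  · intro q
    rcases eq_or_ne q p with rfl | h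
    · simpa using hadj
    · rw [Function.update_of_ne h]; exact hf.1 q
  · intro q r hqr v hv hv'
    rcases eq_or_ne q p with rfl | hq
    · rw [Function.update_self] at hv
      rw [Function.update_of_ne (Ne.symm hqr)] at hv'
      exact hdisj r (Ne.symm hqr) v hv hv'
    · rw [Function.update_of_ne hq] at hv
      rcases eq_or_ne r p with rfl | hr
      · rw [Function.update_self] at hv'
        exact hdisj q hq v hv' hv
      · rw [Function.update_of_ne hr] at hv'
        exact hf.2 q r hqr v hv hv'

lemma mf_rewire2 {f : Fin k → Fin n × Fin n} (hf : IsMatchingFamily G f)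
    (q₁ q₂ : Fin k) (hne : q₁ ≠ q₂) (e₁ e₂ : Fin n × Fin n)
    (h1 : G.Adj e₁.1 e₁.2) (h2 : G.Adj e₂.1 e₂.2)
    (hd : ∀ v, (v = e₁.1 ∨ v = e₁.2) → ¬(v = e₂.1 ∨ v = e₂.2))
    (hcov : ∀ v, ((v = e₁.1 ∨ v = e₁.2) ∨ (v = e₂.1 ∨ v = e₂.2)) →
      ((v = (f q₁).1 ∨ v = (f q₁).2) ∨ (v = (f q₂).1 ∨ v = (f q₂).2))) :
    IsMatchingFamily G (Function.update (Function.update f q₁ e₁) q₂ e₂) := by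
  set g := Function.update (Function.update f q₁ e₁) q₂ e₂ with hgdef
  have hgq1 : g q₁ = e₁ := by
    rw [hgdef, Function.update_of_ne hne, Function.update_self]
  have hgq2 : g q₂ = e₂ := by rw [hgdef, Function.update_self]
  have hgo : ∀ s, s ≠ q₁ → s ≠ q₂ → g s = f s := by
    intro s hs1 hs2
    rw [hgdef, Function.update_of_ne hs2, Function.update_of_ne hs1]
  have hd' : ∀ v, (v = e₂.1 ∨ v = e₂.2) → ¬(v = e₁.1 ∨ v = e₁.2) := fun v h h' => hd v h' h
  constructor
  · intro p
    rcases eq_or_ne p q₁ with h | hp1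
    · rw [h, hgq1]; exact h1
    rcases eq_or_ne p q₂ with h | hp2
    · rw [h, hgq2]; exact h2
    · rw [hgo p hp1 hp2]; exact hf.1 p
  · intro p q hpq v hv hv'
    rcases eq_or_ne p q₁ with h | hp1
    · rw [h, hgq1] at hv
      rw [h] at hpq
      rcases eq_or_ne q q₂ with h' | hq2
      · rw [h', hgq2] at hv'; exact hd v hv hv'
      · rw [hgo q (Ne.symm hpq) hq2] at hv'
        rcases hcov v (Or.inl hv) with hm | hm
        · exact hf.2 q₁ q hpq v hm hv'
        · exact hf.2 q₂ q (Ne.symm hq2) v hm hv'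
    rcases eq_or_ne p q₂ with h | hp2
    · rw [h, hgq2] at hv
      rw [h] at hpq
      rcases eq_or_ne q q₁ with h' | hq1
      · rw [h', hgq1] at hv'; exact hd' v hv hv'
      · rw [hgo q hq1 (Ne.symm hpq)] at hv'
        rcases hcov v (Or.inr hv) with hm | hm
        · exact hf.2 q₁ q (Ne.symm hq1) v hm hv'
        · exact hf.2 q₂ q hpq v hm hv'
    · rw [hgo p hp1 hp2] at hv
      rcases eq_or_ne q q₁ with h' | hq1
      · rw [h', hgq1] at hv'
        rcases hcov v (Or.inl hv') with hm | hm
        · exact hf.2 p q₁ hp1 v hv hm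
        · exact hf.2 p q₂ hp2 v hv hm
      rcases eq_or_ne q q₂ with h' | hq2
      · rw [h', hgq2] at hv'
        rcases hcov v (Or.inr hv') with hm | hm
        · exact hf.2 p q₁ hp1 v hv hm
        · exact hf.2 p q₂ hp2 v hv hm
      · rw [hgo q hq1 hq2] at hv'
        exact hf.2 p q hpq v hv hv'
end Aux

lemma exists_family {n k : ℕ} {G : SimpleGraph (Fin n)} (hk : k ≤ matchNum G) :
    ∃ f : Fin k → Fin n × Fin n, IsMatchingFamily G f := by
  set S := {m | ∃ M : Finset (Sym2 (Fin n)), IsMatchingSet G M ∧ M.card = m} with hSdef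
  have hS : S.Nonempty := ⟨0, ∅, ⟨by simp, by simp⟩, rfl⟩
  have hbdd : BddAbove S :=
    ⟨Fintype.card (Sym2 (Fin n)), by rintro m ⟨M, _, rfl⟩; exact M.card_le_univ⟩
  obtain ⟨M, hM, hcard⟩ := Nat.sSup_mem hS hbdd
  have hkM : k ≤ M.card := by rw [hcard]; exact hk
  obtain ⟨T, hTM, hT⟩ := Finset.exists_subset_card_eq hkM
  have hMT : IsMatchingSet G T :=
    ⟨fun e he => hM.1 (hTM he), fun e he f hf => hM.2 e (hTM he) f (hTM hf)⟩
  refine ⟨fun i => (((T.equivFinOfCardEq hT).symm i : Sym2 (Fin n)).out), ?_, ?_⟩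
  · intro p
    set s := ((T.equivFinOfCardEq hT).symm p : Sym2 (Fin n)) with hs
    have h1 : s ∈ G.edgeSet := hMT.1 ((T.equivFinOfCardEq hT).symm p).2
    rw [← s.out_eq] at h1
    exact G.mem_edgeSet.1 h1
  · intro p q hpq v hv hv'
    set s := ((T.equivFinOfCardEq hT).symm p : Sym2 (Fin n)) with hs
    set t := ((T.equivFinOfCardEq hT).symm q : Sym2 (Fin n)) with ht'
    have hst : s ≠ t := by
      intro h
      exact hpq ((T.equivFinOfCardEq hT).symm.injective (Subtype.ext h))
    have h1 : v ∈ s := by rw [← s.out_eq]; exact Sym2.mem_iff.2 hv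
    have h2 : v ∈ t := by rw [← t.out_eq]; exact Sym2.mem_iff.2 hv'
    exact hMT.2 s ((T.equivFinOfCardEq hT).symm p).2 t ((T.equivFinOfCardEq hT).symm q).2 hst v h1 h2

section Surg
variable {n : ℕ} {G : SimpleGraph (Fin n)}

lemma neighbor_of_single_B {v₀ : Fin n} {A B : Set (Fin n)}
    (hconn : Gᶜ.Connected) (hvset : ∀ v : Fin n, v ≠ v₀ → v ∈ A ∨ v ∈ B)
    (hdisjAB : Disjoint A B) (hAne : A.Nonempty)
    (hnoadj : ∀ a ∈ A, ∀ b ∈ B, ¬ Gᶜ.Adj a b)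
    {j : Fin n} (hj : j ∈ B) (hBj : ∀ b ∈ B, b = j) : ¬ G.Adj v₀ j := by
  intro hadj
  obtain ⟨a, ha⟩ := hAne
  have hja : j ≠ a := fun h => Set.disjoint_left.1 hdisjAB (h ▸ ha) (h ▸ hj)
  obtain ⟨w⟩ := hconn.preconnected j a
  rcases w with _ | ⟨hu, p⟩
  · exact hja rfl
  · rename_i u
    rcases eq_or_ne u v₀ with h | huv
    · rw [h] at hu
      exact ((G.compl_adj j v₀).1 hu).2 hadj.symm
    rcases hvset u huv with hA | hB
    · exact hnoadj u hA j hj hu.symm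
    · exact hu.ne (hBj u hB).symm

lemma neighbor_of_single_A {v₀ : Fin n} {A B : Set (Fin n)}
    (hconn : Gᶜ.Connected) (hvset : ∀ v : Fin n, v ≠ v₀ → v ∈ A ∨ v ∈ B)
    (hdisjAB : Disjoint A B) (hBne : B.Nonempty)
    (hnoadj : ∀ a ∈ A, ∀ b ∈ B, ¬ Gᶜ.Adj a b)
    {j : Fin n} (hj : j ∈ A) (hAj : ∀ a ∈ A, a = j) : ¬ G.Adj v₀ j := by
  intro hadj
  obtain ⟨b, hb⟩ := hBne
  have hjb : j ≠ b := fun h => Set.disjoint_left.1 hdisjAB (h ▸ hj) (h ▸ hb)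
  obtain ⟨w⟩ := hconn.preconnected j b
  rcases w with _ | ⟨hu, p⟩
  · exact hjb rfl
  · rename_i u
    rcases eq_or_ne u v₀ with h | huv
    · rw [h] at hu
      exact ((G.compl_adj j v₀).1 hu).2 hadj.symm
    rcases hvset u huv with hA | hB
    · exact hu.ne (hAj u hA).symm
    · exact hnoadj j hj u hB hu

lemma surgery {k : ℕ} (hk : 2 ≤ k) (hiso : NoIsolated G)
    (v₀ : Fin n) (A B : Set (Fin n)) (hsetup : CutVertexSetup G v₀ A B)
    (f : Fin k → Fin n × Fin n) (hf : IsMatchingFamily G f) :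
    ∃ e : Fin k → Fin n × Fin n, IsSpecialMatching G v₀ A B hk e := by
  obtain ⟨-, ⟨hconn, -⟩, hunion, hdisjAB, hAne, hBne, hnoadj, -⟩ := hsetup
  have hvset : ∀ v : Fin n, v ≠ v₀ → v ∈ A ∨ v ∈ B := by
    intro v hv
    have : v ∈ A ∪ B := by rw [hunion]; exact hv
    exact this
  have hAv : ∀ a ∈ A, a ≠ v₀ := by
    intro a ha
    have : a ∈ A ∪ B := Or.inl ha
    rw [hunion] at this; exact this
  have hBv : ∀ b ∈ B, b ≠ v₀ := by
    intro b hb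
    have : b ∈ A ∪ B := Or.inr hb
    rw [hunion] at this; exact this
  have hAB : ∀ a ∈ A, ∀ b ∈ B, G.Adj a b := by
    intro a ha b hb
    have hne : a ≠ b := fun h => Set.disjoint_left.1 hdisjAB ha (h ▸ hb)
    by_contra h
    exact hnoadj a ha b hb ((G.compl_adj a b).2 ⟨hne, h⟩)
  set i0 : Fin k := ⟨0, by omega⟩ with hi0
  set i1 : Fin k := ⟨1, by omega⟩ with hi1
  have h01 : i0 ≠ i1 := by simp [hi0, hi1, Fin.ext_iff]
  -- Step 1: get a matching family with the cut vertex as first endpoint of edge 0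
  have step1 : ∃ g : Fin k → Fin n × Fin n, IsMatchingFamily G g ∧ (g i0).1 = v₀ := by
    by_cases h : ∃ p, v₀ = (f p).1 ∨ v₀ = (f p).2
    · obtain ⟨p, hp⟩ := h
      have hg1v : (f ∘ Equiv.swap i0 p) i0 = f p := by
        simp [Equiv.swap_apply_left]
      have hmf1 := mf_perm hf (Equiv.swap i0 p)
      rcases hp with hp | hp
      · exact ⟨f ∘ Equiv.swap i0 p, hmf1, by rw [hg1v]; exact hp.symm⟩
      · refine ⟨Function.update (f ∘ Equiv.swap i0 p) i0
            (((f ∘ Equiv.swap i0 p) i0).2, ((f ∘ Equiv.swap i0 p) i0).1),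
            mf_flip hmf1 i0, ?_⟩
        rw [Function.update_self, hg1v]; exact hp.symm
    · have hx : ∀ p, ¬(v₀ = (f p).1 ∨ v₀ = (f p).2) := fun p hp => h ⟨p, hp⟩
      obtain ⟨j, hj⟩ := hiso v₀
      by_cases hj' : ∃ p, j = (f p).1 ∨ j = (f p).2
      · obtain ⟨p, hp⟩ := hj'
        have hmfu : IsMatchingFamily G (Function.update f p (v₀, j)) := by
          refine mf_update hf p (v₀, j) hj ?_
          intro q hq v hv hv'
          rcases hv with rfl | rfl
          · exact hx q hv'
          · exact hf.2 p q (Ne.symm hq) _ hp hv'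
        refine ⟨Function.update f p (v₀, j) ∘ Equiv.swap i0 p,
          mf_perm hmfu (Equiv.swap i0 p), ?_⟩
        show (Function.update f p (v₀, j) (Equiv.swap i0 p i0)).1 = v₀
        rw [Equiv.swap_apply_left, Function.update_self]
      · have hy : ∀ p, ¬(j = (f p).1 ∨ j = (f p).2) := fun p hp => hj' ⟨p, hp⟩
        refine ⟨Function.update f i0 (v₀, j), ?_, by rw [Function.update_self]⟩
        refine mf_update hf i0 (v₀, j) hj ?_
        intro q hq v hv hv'
        rcases hv with rfl | rfl
        · exact hx q hv'
        · exact hy q hv'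
  clear hf
  obtain ⟨g, hg, hg0⟩ := step1
  have hnov : ∀ q, q ≠ i0 → ¬(v₀ = (g q).1 ∨ v₀ = (g q).2) :=
    fun q hq => hg.2 i0 q (fun h => hq h.symm) v₀ (Or.inl hg0.symm)
  have hq1AB : ∀ q, q ≠ i0 → ((g q).1 ∈ A ∨ (g q).1 ∈ B) :=
    fun q hq => hvset _ (fun h => hnov q hq (Or.inl h.symm))
  have hq2AB : ∀ q, q ≠ i0 → ((g q).2 ∈ A ∨ (g q).2 ∈ B) :=
    fun q hq => hvset _ (fun h => hnov q hq (Or.inr h.symm))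
  by_cases hmix : ∃ q, q ≠ i0 ∧ (((g q).1 ∈ A ∧ (g q).2 ∈ B) ∨ ((g q).1 ∈ B ∧ (g q).2 ∈ A))
  · obtain ⟨q, hq, hcase⟩ := hmix
    have hswap0 : (g ∘ Equiv.swap i1 q) i0 = g i0 := by
      show g (Equiv.swap i1 q i0) = g i0
      rw [Equiv.swap_apply_of_ne_of_ne h01 (Ne.symm hq)]
    have hswap1 : (g ∘ Equiv.swap i1 q) i1 = g q := by
      show g (Equiv.swap i1 q i1) = g q
      rw [Equiv.swap_apply_left]
    have hmf2 := mf_perm hg (Equiv.swap i1 q)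
    rcases hcase with ⟨h1A, h2B⟩ | ⟨h1B, h2A⟩
    · exact ⟨g ∘ Equiv.swap i1 q, hmf2, by rw [hswap0]; exact hg0,
        by rw [hswap1]; exact h1A, by rw [hswap1]; exact h2B⟩
    · refine ⟨Function.update (g ∘ Equiv.swap i1 q) i1
          (((g ∘ Equiv.swap i1 q) i1).2, ((g ∘ Equiv.swap i1 q) i1).1),
          mf_flip hmf2 i1, ?_, ?_, ?_⟩
      · rw [Function.update_of_ne h01, hswap0]; exact hg0
      · rw [Function.update_self, hswap1]; exact h2A
      · rw [Function.update_self, hswap1]; exact h1B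
  · have hmix' : ∀ q, q ≠ i0 →
        ¬(((g q).1 ∈ A ∧ (g q).2 ∈ B) ∨ ((g q).1 ∈ B ∧ (g q).2 ∈ A)) :=
      fun q hq hc => hmix ⟨q, hq, hc⟩
    have hpure : ∀ q, q ≠ i0 →
        ((g q).1 ∈ A ∧ (g q).2 ∈ A) ∨ ((g q).1 ∈ B ∧ (g q).2 ∈ B) := by
      intro q hq
      rcases hq1AB q hq with h1 | h1 <;> rcases hq2AB q hq with h2 | h2
      · exact Or.inl ⟨h1, h2⟩
      · exact absurd (Or.inl ⟨h1, h2⟩) (hmix' q hq)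
      · exact absurd (Or.inr ⟨h1, h2⟩) (hmix' q hq)
      · exact Or.inr ⟨h1, h2⟩
    have h10 : i1 ≠ i0 := Ne.symm h01
    have hadj0 : G.Adj v₀ (g i0).2 := hg0 ▸ hg.1 i0
    by_cases hA2 : ∃ q, q ≠ i0 ∧ (g q).1 ∈ A ∧ (g q).2 ∈ A
    · by_cases hB2 : ∃ q, q ≠ i0 ∧ (g q).1 ∈ B ∧ (g q).2 ∈ B
      · -- cross swap
        obtain ⟨q₁, hq₁, ha1, ha2⟩ := hA2
        obtain ⟨q₂, hq₂, hb1, hb2⟩ := hB2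
        have hq12 : q₁ ≠ q₂ := fun h => Set.disjoint_left.1 hdisjAB ha1 (h ▸ hb1)
        have hd : ∀ v, (v = (g q₁).1 ∨ v = (g q₂).1) → ¬(v = (g q₁).2 ∨ v = (g q₂).2) := by
          rintro v (rfl | rfl) (h | h)
          · exact (hg.1 q₁).ne h
          · exact Set.disjoint_left.1 hdisjAB ha1 (h ▸ hb2)
          · exact Set.disjoint_left.1 hdisjAB (h ▸ ha2) hb1
          · exact (hg.1 q₂).ne h
        set e₁ : Fin n × Fin n := ((g q₁).1, (g q₂).1) with he₁
        set e₂ : Fin n × Fin n := ((g q₁).2, (g q₂).2) with he₂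
        have hmf3 := mf_rewire2 hg q₁ q₂ hq12 e₁ e₂
          (hAB _ ha1 _ hb1) (hAB _ ha2 _ hb2) hd (by intro v hv; tauto)
        set g3 := Function.update (Function.update g q₁ e₁) q₂ e₂ with hg3
        have hg3i0 : g3 i0 = g i0 := by
          rw [hg3, Function.update_of_ne (Ne.symm hq₂), Function.update_of_ne (Ne.symm hq₁)]
        have hg3q1 : g3 q₁ = e₁ := by
          rw [hg3, Function.update_of_ne hq12, Function.update_self]
        have hswap0 : (g3 ∘ Equiv.swap i1 q₁) i0 = g3 i0 := by
          show g3 (Equiv.swap i1 q₁ i0) = g3 i0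
          rw [Equiv.swap_apply_of_ne_of_ne h01 (Ne.symm hq₁)]
        have hswap1 : (g3 ∘ Equiv.swap i1 q₁) i1 = g3 q₁ := by
          show g3 (Equiv.swap i1 q₁ i1) = g3 q₁
          rw [Equiv.swap_apply_left]
        refine ⟨g3 ∘ Equiv.swap i1 q₁, mf_perm hmf3 (Equiv.swap i1 q₁), ?_, ?_, ?_⟩
        · rw [hswap0, hg3i0]; exact hg0
        · rw [hswap1, hg3q1]; exact ha1
        · rw [hswap1, hg3q1]; exact hb1
      · -- all non-head edges lie in A
        have hallA : ∀ q, q ≠ i0 → (g q).1 ∈ A ∧ (g q).2 ∈ A :=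
          fun q hq => (hpure q hq).resolve_right (fun hc => hB2 ⟨q, hq, hc⟩)
        obtain ⟨b, hbB, hbj⟩ : ∃ b ∈ B, b ≠ (g i0).2 := by
          by_contra hc
          push_neg at hc
          obtain ⟨b0, hb0⟩ := hBne
          have hjB : (g i0).2 ∈ B := (hc b0 hb0) ▸ hb0
          exact neighbor_of_single_B hconn hvset hdisjAB hAne hnoadj hjB hc hadj0
        have haA : (g i1).1 ∈ A := (hallA i1 h10).1
        refine ⟨Function.update g i1 ((g i1).1, b),
          mf_update hg i1 ((g i1).1, b) (hAB _ haA _ hbB) ?_, ?_, ?_, ?_⟩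
        · intro q hq v hv hv'
          rcases hv with rfl | rfl
          · exact hg.2 i1 q (Ne.symm hq) _ (Or.inl rfl) hv'
          · rcases eq_or_ne q i0 with rfl | hq0
            · rcases hv' with h | h
              · exact hBv _ hbB (h.trans hg0)
              · exact hbj h
            · rcases hv' with h | h
              · exact Set.disjoint_left.1 hdisjAB
                  (by rw [h]; exact (hallA q hq0).1) hbB
              · exact Set.disjoint_left.1 hdisjAB
                  (by rw [h]; exact (hallA q hq0).2) hbB
        · rw [Function.update_of_ne h01]; exact hg0
        · rw [Function.update_self]; exact haA
        · rw [Function.update_self]; exact hbB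
    · -- all non-head edges lie in B
      have hallB : ∀ q, q ≠ i0 → (g q).1 ∈ B ∧ (g q).2 ∈ B :=
        fun q hq => (hpure q hq).resolve_left (fun hc => hA2 ⟨q, hq, hc⟩)
      obtain ⟨a, haA, haj⟩ : ∃ a ∈ A, a ≠ (g i0).2 := by
        by_contra hc
        push_neg at hc
        obtain ⟨a0, ha0⟩ := hAne
        have hjA : (g i0).2 ∈ A := (hc a0 ha0) ▸ ha0
        exact neighbor_of_single_A hconn hvset hdisjAB hBne hnoadj hjA hc hadj0
      have hbB : (g i1).1 ∈ B := (hallB i1 h10).1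
      refine ⟨Function.update g i1 (a, (g i1).1),
        mf_update hg i1 (a, (g i1).1) (hAB _ haA _ hbB) ?_, ?_, ?_, ?_⟩
      · intro q hq v hv hv'
        rcases hv with rfl | rfl
        · rcases eq_or_ne q i0 with rfl | hq0
          · rcases hv' with h | h
            · exact hAv _ haA (h.trans hg0)
            · exact haj h
          · rcases hv' with h | h
            · exact Set.disjoint_left.1 hdisjAB haA (by rw [h]; exact (hallB q hq0).1)
            · exact Set.disjoint_left.1 hdisjAB haA (by rw [h]; exact (hallB q hq0).2)
        · exact hg.2 i1 q (Ne.symm hq) _ (Or.inl rfl) hv'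
      · rw [Function.update_of_ne h01]; exact hg0
      · rw [Function.update_self]; exact haA
      · rw [Function.update_self]; exact hbB
end Surg

/-- **Lemma 3.4.** Let `G` be a graph with no isolated vertices such that `Gᶜ` is
chordal, connected with a cut vertex `v₀`. Then for any `2 ≤ k ≤ ν(G)` there exists a
special `k`-matching of `G`. -/
theorem exists_special_matching {n : ℕ} (G : SimpleGraph (Fin n)) (hiso : NoIsolated G)
    (v₀ : Fin n) (A B : Set (Fin n)) (hsetup : CutVertexSetup G v₀ A B) :
    ∀ k : ℕ, (hk : 2 ≤ k) → k ≤ matchNum G →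
      ∃ e : Fin k → Fin n × Fin n, IsSpecialMatching G v₀ A B hk e := by
  intro k hk hknu
  obtain ⟨f, hf⟩ := exists_family hknu
  exact surgery hk hiso v₀ A B hsetup f hf
end

section
/- Let G be a finite simple graph on vertex set [n] with no isolated vertices such that the complementary graph G^c is chordal and connected with cut vertex 1. Then every special k-matching of G is a dominating k-matching of G. -/
open MvPolynomial

/-- **Lemma 3.5.** Let `G` be a graph with no isolated vertices such that `Gᶜ` is
chordal, connected with a cut vertex `v₀`. Then every special `k`-matching of `G` is a
dominating `k`-matching: every vertex not in `V(M)` is adjacent to a vertex of `V(M)`. -/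
theorem special_matching_is_dominating {n : ℕ} (G : SimpleGraph (Fin n))
    (hiso : NoIsolated G) (v₀ : Fin n) (A B : Set (Fin n))
    (hsetup : CutVertexSetup G v₀ A B)
    {k : ℕ} (hk : 2 ≤ k) (e : Fin k → Fin n × Fin n)
    (hsp : IsSpecialMatching G v₀ A B hk e) :
    ∀ t : Fin n, (∀ p, t ≠ (e p).1 ∧ t ≠ (e p).2) →
      ∃ p, G.Adj t (e p).1 ∨ G.Adj t (e p).2 := by
  intro t ht
  obtain ⟨hAB, _, hnoadj⟩ : A ∪ B = {u | u ≠ v₀} ∧ Disjoint A B ∧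
      (∀ a ∈ A, ∀ b ∈ B, ¬ Gᶜ.Adj a b) :=
    ⟨hsetup.2.2.1, hsetup.2.2.2.1, hsetup.2.2.2.2.2.2.1⟩
  obtain ⟨_, h0, h1, h2⟩ := hsp
  have htv : t ≠ v₀ := h0 ▸ (ht ⟨0, by omega⟩).1
  have htAB : t ∈ A ∪ B := hAB ▸ htv
  rcases htAB with hA | hB
  · refine ⟨⟨1, by omega⟩, Or.inr ?_⟩
    have := hnoadj t hA _ h2
    rw [SimpleGraph.compl_adj] at this
    push_neg at this
    exact this (ht ⟨1, by omega⟩).2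
  · refine ⟨⟨1, by omega⟩, Or.inl ?_⟩
    have := hnoadj _ h1 t hB
    rw [SimpleGraph.compl_adj] at this
    push_neg at this
    exact (this (fun h => (ht ⟨1, by omega⟩).1 h.symm)).symm
end

section
/- Let I ⊆ S' = K[x_1,…,x_n] be a squarefree monomial ideal, x a new variable, S = S'[x], and J = (I, x) ⊆ S. Then for every k with 2 ≤ k ≤ ν(I), one has J^[k] = I^[k] + x·I^[k−1] and I^[k] ∩ x·I^[k−1] = x·I^[k]. -/
open MvPolynomial

/-!
Identify `K[x₁,…,xₙ,x]` with `S'[x]`. A polynomial in `(I, x)^k` has its `x^j`-coefficient in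
`I^(k-j)`, so for `u ∈ S'` we get `u ∈ J^k ↔ u ∈ I^k` and `x·u ∈ J^k ↔ u ∈ I^(k-1)`. Sorting
the squarefree monomials of `J^k` by whether `x` divides them gives `J^[k] = I^[k] + x·I^[k-1]`.
The intersection formula holds because `I^[k] ⊆ I^[k-1]` and an element of `I^[k]S` divisible
by `x` is `x` times an element of `I^[k]S`.
-/

namespace Polynomial

variable {R : Type*} [CommRing R]

theorem coeff_mem_pow_of_mem_pow_map_C_sup_span_X (I : Ideal R) {k : ℕ} {f : R[X]}
    (hf : f ∈ (I.map C ⊔ Ideal.span {X}) ^ k) (j : ℕ) : f.coeff j ∈ I ^ (k - j) := by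
  induction k generalizing f j with
  | zero => simp
  | succ k ih =>
    rw [pow_succ'] at hf
    induction hf using Submodule.mul_induction_on' with
    | add f _ g _ hf hg => simpa only [coeff_add] using add_mem hf hg
    | mem_mul_mem a ha g hg =>
      rw [coeff_mul]
      refine Ideal.sum_mem _ fun ⟨i, l⟩ hil => ?_
      rw [Finset.HasAntidiagonal.mem_antidiagonal] at hil
      have ha : a.coeff i ∈ I ^ (1 - i) := by
        obtain ⟨p, hp, q, hq, rfl⟩ := Submodule.mem_sup.mp ha
        rcases i with _ | i
        · have hq0 : q.coeff 0 = 0 := X_dvd_iff.mp (Ideal.mem_span_singleton.mp hq)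
          simpa [hq0] using Ideal.mem_map_C_iff.mp hp 0
        · simp
      exact Ideal.pow_le_pow_right (by omega) (pow_add I _ _ ▸ Ideal.mul_mem_mul ha (ih hg l))

theorem C_mem_pow_map_C_sup_span_X_iff (I : Ideal R) {k : ℕ} {a : R} :
    C a ∈ (I.map C ⊔ Ideal.span {X}) ^ k ↔ a ∈ I ^ k := by
  refine ⟨fun h => by simpa using coeff_mem_pow_of_mem_pow_map_C_sup_span_X I h 0, fun h => ?_⟩
  have hC : C a ∈ (I.map C) ^ k := Ideal.map_pow C I k ▸ Ideal.mem_map_of_mem C h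
  exact Ideal.pow_right_mono le_sup_left k hC

theorem X_mul_C_mem_pow_map_C_sup_span_X_iff (I : Ideal R) {k : ℕ} {a : R} :
    X * C a ∈ (I.map C ⊔ Ideal.span {X}) ^ k ↔ a ∈ I ^ (k - 1) := by
  refine ⟨fun h => by simpa using coeff_mem_pow_of_mem_pow_map_C_sup_span_X I h 1, fun h => ?_⟩
  rcases k with _ | k
  · simp
  · rw [pow_succ']
    exact Ideal.mul_mem_mul (Ideal.mem_sup_right (Ideal.mem_span_singleton_self X))
      ((C_mem_pow_map_C_sup_span_X_iff I).mpr h)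

theorem map_C_inf_span_X_mul_map_C {A B : Ideal R} (hAB : A ≤ B) :
    A.map C ⊓ Ideal.span {X} * B.map C = Ideal.span {X} * A.map (C : R →+* R[X]) := by
  refine le_antisymm (fun f hf => ?_) (le_inf Ideal.mul_le_right (Ideal.mul_mono_right
    (Ideal.map_mono hAB)))
  obtain ⟨hfA, hfB⟩ := Submodule.mem_inf.mp hf
  obtain ⟨g, -, rfl⟩ := Ideal.mem_span_singleton_mul.mp hfB
  refine Ideal.mul_mem_mul (Ideal.mem_span_singleton_self X) (Ideal.mem_map_C_iff.mpr fun m => ?_)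
  simpa [coeff_X_mul] using Ideal.mem_map_C_iff.mp hfA (m + 1)

end Polynomial

namespace MvPolynomial

variable (R : Type*) [CommRing R] (n : ℕ)

noncomputable def finSuccLastEquiv :
    MvPolynomial (Fin (n + 1)) R ≃ₐ[R] Polynomial (MvPolynomial (Fin n) R) :=
  (renameEquiv R finSuccEquivLast).trans (optionEquivLeft R (Fin n))

variable {R n}

@[simp]
theorem finSuccLastEquiv_X_last :
    finSuccLastEquiv R n (X (Fin.last n)) = Polynomial.X := by
  simp [finSuccLastEquiv, optionEquivLeft_X_none]

@[simp]
theorem finSuccLastEquiv_rename_castSucc (p : MvPolynomial (Fin n) R) :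
    finSuccLastEquiv R n (rename Fin.castSucc p) = Polynomial.C p := by
  have h : (finSuccLastEquiv R n).toAlgHom.comp (rename Fin.castSucc) = Polynomial.CAlgHom :=
    algHom_ext fun i => by simp [finSuccLastEquiv, optionEquivLeft_X_some]
  exact DFunLike.congr_fun h p

theorem map_finSuccLastEquiv_map_rename_castSucc (L : Ideal (MvPolynomial (Fin n) R)) :
    (L.map (rename Fin.castSucc)).map (finSuccLastEquiv R n) = L.map Polynomial.C := by
  change (L.map (rename Fin.castSucc).toRingHom).map (finSuccLastEquiv R n).toRingHom = _
  rw [Ideal.map_map]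
  exact congrArg (L.map ·) (RingHom.ext finSuccLastEquiv_rename_castSucc)

theorem map_finSuccLastEquiv_span_X_last :
    (Ideal.span {X (Fin.last n)}).map (finSuccLastEquiv R n) = Ideal.span {Polynomial.X} := by
  simp [Ideal.map_span]

variable (I : Ideal (MvPolynomial (Fin n) R))

theorem map_finSuccLastEquiv_map_rename_castSucc_sup_span_X_last :
    (I.map (rename Fin.castSucc) ⊔ Ideal.span {X (Fin.last n)}).map (finSuccLastEquiv R n) =
      I.map Polynomial.C ⊔ Ideal.span {Polynomial.X} := by
  rw [Ideal.map_sup, map_finSuccLastEquiv_map_rename_castSucc, map_finSuccLastEquiv_span_X_last]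

theorem mem_pow_map_rename_castSucc_sup_span_X_last_iff {k : ℕ}
    {p : MvPolynomial (Fin (n + 1)) R} :
    p ∈ (I.map (rename Fin.castSucc) ⊔ Ideal.span {X (Fin.last n)}) ^ k ↔
      finSuccLastEquiv R n p ∈ (I.map Polynomial.C ⊔ Ideal.span {Polynomial.X}) ^ k := by
  rw [← map_finSuccLastEquiv_map_rename_castSucc_sup_span_X_last, ← Ideal.map_pow]
  exact (Ideal.apply_mem_of_equiv_iff (f := (finSuccLastEquiv R n).toRingEquiv)).symm

theorem rename_castSucc_mem_pow_iff {k : ℕ} {p : MvPolynomial (Fin n) R} :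
    rename Fin.castSucc p ∈ (I.map (rename Fin.castSucc) ⊔ Ideal.span {X (Fin.last n)}) ^ k ↔
      p ∈ I ^ k := by
  rw [mem_pow_map_rename_castSucc_sup_span_X_last_iff, finSuccLastEquiv_rename_castSucc,
    Polynomial.C_mem_pow_map_C_sup_span_X_iff]

theorem X_last_mul_rename_castSucc_mem_pow_iff {k : ℕ} {p : MvPolynomial (Fin n) R} :
    X (Fin.last n) * rename Fin.castSucc p ∈
        (I.map (rename Fin.castSucc) ⊔ Ideal.span {X (Fin.last n)}) ^ k ↔ p ∈ I ^ (k - 1) := by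
  rw [mem_pow_map_rename_castSucc_sup_span_X_last_iff, map_mul, finSuccLastEquiv_X_last,
    finSuccLastEquiv_rename_castSucc, Polynomial.X_mul_C_mem_pow_map_C_sup_span_X_iff]

theorem map_rename_castSucc_inf_span_X_last_mul {A B : Ideal (MvPolynomial (Fin n) R)}
    (hAB : A ≤ B) :
    A.map (rename Fin.castSucc) ⊓ Ideal.span {X (Fin.last n)} * B.map (rename Fin.castSucc) =
      Ideal.span {X (Fin.last n)} * A.map (rename Fin.castSucc) := by
  let e := (finSuccLastEquiv R n).toRingEquiv
  apply e.idealComapOrderIso.symm.injective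
  simp only [OrderIso.map_inf, RingEquiv.idealComapOrderIso_symm_apply, Ideal.map_mul]
  have hA := map_finSuccLastEquiv_map_rename_castSucc A
  have hB := map_finSuccLastEquiv_map_rename_castSucc B
  have hX := map_finSuccLastEquiv_span_X_last (R := R) (n := n)
  change Ideal.map e _ = _ at hA hB hX
  rw [hA, hB, hX]
  exact Polynomial.map_C_inf_span_X_mul_map_C hAB

end MvPolynomial

section SqfreePower

variable {K : Type} [Field K]

theorem sqMon_mem_sqfreePower {σ : Type} {I : Ideal (MvPolynomial σ K)} {k : ℕ} {F : Finset σ}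
    (h : sqMon K F ∈ I ^ k) : sqMon K F ∈ sqfreePower K I k :=
  Ideal.subset_span ⟨F, rfl, h⟩

theorem sqfreePower_le_iff {σ : Type} {I L : Ideal (MvPolynomial σ K)} {k : ℕ} :
    sqfreePower K I k ≤ L ↔ ∀ F : Finset σ, sqMon K F ∈ I ^ k → sqMon K F ∈ L := by
  simp only [sqfreePower, Ideal.span_le, Set.subset_def, Set.mem_ofPred_eq, SetLike.mem_coe]
  exact ⟨fun h F hF => h _ ⟨F, rfl, hF⟩, by rintro h _ ⟨F, rfl, hF⟩; exact h F hF⟩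

theorem sqfreePower_antitone {σ : Type} (I : Ideal (MvPolynomial σ K)) :
    Antitone (sqfreePower K I) := fun _ _ hab =>
  sqfreePower_le_iff.mpr fun _ hF => sqMon_mem_sqfreePower (Ideal.pow_le_pow_right hab hF)

theorem rename_sqMon {σ τ : Type} (f : σ ↪ τ) (F : Finset σ) :
    rename f (sqMon K F) = sqMon K (F.map f) := by
  simp [sqMon, Finset.prod_map]

variable {n : ℕ}

theorem sqMon_erase_last (F : Finset (Fin (n + 1))) :
    sqMon K (F.erase (Fin.last n)) = rename Fin.castSucc
      (sqMon K (F.preimage Fin.castSucc (Fin.castSucc_injective n).injOn)) := by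
  refine (congrArg (sqMon K) ?_).trans (rename_sqMon Fin.castSuccEmb _).symm
  ext i
  cases i using Fin.lastCases <;> simp [Fin.castSucc_ne_last]

theorem rename_castSucc_sqMon (F : Finset (Fin n)) :
    rename Fin.castSucc (sqMon K F) = sqMon K (F.map Fin.castSuccEmb) :=
  rename_sqMon Fin.castSuccEmb F

theorem X_last_mul_rename_castSucc_sqMon (F : Finset (Fin n)) :
    X (Fin.last n) * rename Fin.castSucc (sqMon K F) =
      sqMon K ((F.map Fin.castSuccEmb).cons (Fin.last n) (by simp [Fin.castSucc_ne_last])) := by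
  rw [rename_castSucc_sqMon, sqMon, sqMon, Finset.prod_cons]

theorem sqfreePower_map_rename_castSucc_sup_span_X_last (I : Ideal (MvPolynomial (Fin n) K))
    (k : ℕ) :
    sqfreePower K (I.map (rename Fin.castSucc) ⊔ Ideal.span {X (Fin.last n)}) k =
      (sqfreePower K I k).map (rename Fin.castSucc) ⊔
        Ideal.span {X (Fin.last n)} * (sqfreePower K I (k - 1)).map (rename Fin.castSucc) := by
  set J := I.map (rename Fin.castSucc) ⊔ Ideal.span {X (Fin.last n)}
  refine le_antisymm (sqfreePower_le_iff.mpr fun F hF => ?_) (sup_le ?_ ?_)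
  · by_cases hl : Fin.last n ∈ F
    · rw [sqMon, ← Finset.mul_prod_erase F _ hl, ← sqMon, sqMon_erase_last] at hF ⊢
      exact Ideal.mem_sup_right (Ideal.mul_mem_mul (Ideal.mem_span_singleton_self _)
        (Ideal.mem_map_of_mem _ (sqMon_mem_sqfreePower
          ((X_last_mul_rename_castSucc_mem_pow_iff I).mp hF))))
    · rw [← Finset.erase_eq_of_notMem hl, sqMon_erase_last] at hF ⊢
      exact Ideal.mem_sup_left (Ideal.mem_map_of_mem _
        (sqMon_mem_sqfreePower ((rename_castSucc_mem_pow_iff I).mp hF)))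
  · refine Ideal.map_le_iff_le_comap.mpr (sqfreePower_le_iff.mpr fun F hF => ?_)
    have hmem := (rename_castSucc_mem_pow_iff I).mpr hF
    rw [rename_castSucc_sqMon] at hmem
    rw [Ideal.mem_comap, rename_castSucc_sqMon]
    exact sqMon_mem_sqfreePower hmem
  · have hcolon : (sqfreePower K I (k - 1)).map (rename Fin.castSucc) ≤
        (sqfreePower K J k).colon {X (Fin.last n)} := by
      refine Ideal.map_le_iff_le_comap.mpr (sqfreePower_le_iff.mpr fun F hF => ?_)
      have hmem := (X_last_mul_rename_castSucc_mem_pow_iff I).mpr hF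
      rw [X_last_mul_rename_castSucc_sqMon] at hmem
      rw [Ideal.mem_comap, Submodule.mem_colon_singleton, smul_eq_mul, mul_comm,
        X_last_mul_rename_castSucc_sqMon]
      exact sqMon_mem_sqfreePower hmem
    refine Ideal.span_singleton_mul_le_iff.mpr fun z hz => ?_
    simpa only [smul_eq_mul, mul_comm] using Submodule.mem_colon_singleton.mp (hcolon hz)

theorem map_rename_castSucc_sqfreePower_inf (I : Ideal (MvPolynomial (Fin n) K)) (k : ℕ) :
    (sqfreePower K I k).map (rename Fin.castSucc) ⊓
        Ideal.span {X (Fin.last n)} * (sqfreePower K I (k - 1)).map (rename Fin.castSucc) =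
      Ideal.span {X (Fin.last n)} * (sqfreePower K I k).map (rename Fin.castSucc) :=
  map_rename_castSucc_inf_span_X_last_mul (sqfreePower_antitone I (Nat.sub_le k 1))

end SqfreePower

theorem sqfreePower_of_adjoin_variable_splitting_general (K : Type) [Field K] (n : ℕ)
    (I : Ideal (MvPolynomial (Fin n) K))
    (J : Ideal (MvPolynomial (Fin (n + 1)) K))
    (hJ : J = Ideal.map (MvPolynomial.rename (Fin.castSucc : Fin n → Fin (n + 1))) I ⊔
              Ideal.span {MvPolynomial.X (Fin.last n)}) :
    ∀ k : ℕ, 2 ≤ k → k ≤ monGrade K I →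
      sqfreePower K J k =
        Ideal.map (MvPolynomial.rename (Fin.castSucc : Fin n → Fin (n + 1)))
            (sqfreePower K I k) ⊔
          Ideal.span {MvPolynomial.X (Fin.last n)} *
            Ideal.map (MvPolynomial.rename (Fin.castSucc : Fin n → Fin (n + 1)))
              (sqfreePower K I (k - 1)) ∧
      Ideal.map (MvPolynomial.rename (Fin.castSucc : Fin n → Fin (n + 1)))
            (sqfreePower K I k) ⊓
          (Ideal.span {MvPolynomial.X (Fin.last n)} *
            Ideal.map (MvPolynomial.rename (Fin.castSucc : Fin n → Fin (n + 1)))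
              (sqfreePower K I (k - 1))) =
        Ideal.span {MvPolynomial.X (Fin.last n)} *
          Ideal.map (MvPolynomial.rename (Fin.castSucc : Fin n → Fin (n + 1)))
            (sqfreePower K I k) := by
  intro k _ _
  subst hJ
  exact ⟨sqfreePower_map_rename_castSucc_sup_span_X_last I k,
    map_rename_castSucc_sqfreePower_inf I k⟩

/-- For a squarefree monomial ideal `I ⊆ S' = K[x₁,…,xₙ]` and `J = (I, x) ⊆ S = S'[x]`,
for every `2 ≤ k ≤ ν(I)` one has `J^[k] = I^[k] + x·I^[k−1]` and
`I^[k] ∩ x·I^[k−1] = x·I^[k]` (squarefree powers of `I` regarded in `S` via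
extension along `S' ↪ S`). -/
theorem sqfreePower_of_adjoin_variable_splitting (K : Type) [Field K] (n : ℕ)
    (I : Ideal (MvPolynomial (Fin n) K)) (hI : IsSqfreeMonomialIdeal K I)
    (J : Ideal (MvPolynomial (Fin (n + 1)) K))
    (hJ : J = Ideal.map (MvPolynomial.rename (Fin.castSucc : Fin n → Fin (n + 1))) I ⊔
              Ideal.span {MvPolynomial.X (Fin.last n)}) :
    ∀ k : ℕ, 2 ≤ k → k ≤ monGrade K I →
      sqfreePower K J k =
        Ideal.map (MvPolynomial.rename (Fin.castSucc : Fin n → Fin (n + 1)))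
            (sqfreePower K I k) ⊔
          Ideal.span {MvPolynomial.X (Fin.last n)} *
            Ideal.map (MvPolynomial.rename (Fin.castSucc : Fin n → Fin (n + 1)))
              (sqfreePower K I (k - 1)) ∧
      Ideal.map (MvPolynomial.rename (Fin.castSucc : Fin n → Fin (n + 1)))
            (sqfreePower K I k) ⊓
          (Ideal.span {MvPolynomial.X (Fin.last n)} *
            Ideal.map (MvPolynomial.rename (Fin.castSucc : Fin n → Fin (n + 1)))
              (sqfreePower K I (k - 1))) =
        Ideal.span {MvPolynomial.X (Fin.last n)} *
          Ideal.map (MvPolynomial.rename (Fin.castSucc : Fin n → Fin (n + 1)))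
            (sqfreePower K I k) :=
  sqfreePower_of_adjoin_variable_splitting_general K n I J hJ
end
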